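/- arXiv:2512.09180 — 5 statements merged into one kernel-verified Lean document; each statement's English description precedes it below -/
import Mathlib

section
/- Let Γ be a group. Suppose Γ has a subgroup A such that (i) A is not approximable with respect to the family, and (ii) every element a ∈ A with a ≠ 1 normally generates Γ (the normal closure of {a} in Γ is all of Γ). Then every quotient of Γ that is approximable with respect to the family is trivial; that is, for every normal subgroup N of Γ, if Γ/N is approximable then N = Γ. -/
open Filter Topology

/-- A sequence of maps `φ n : Γ → G (idx n)` into groups with metrics is an *asymptotic
homomorphism* if `d(φ n (g * h), φ n g * φ n h) → 0` for all `g h : Γ`. -/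
def IsAsymptoticHom {I : Type*} (G : I → Type*) [∀ i, Group (G i)] [∀ i, MetricSpace (G i)]
    {Γ : Type*} [Group Γ] (idx : ℕ → I) (φ : ∀ n, Γ → G (idx n)) : Prop :=
  ∀ g h : Γ, Tendsto (fun n => dist (φ n (g * h)) (φ n g * φ n h)) atTop (𝓝 0)

/-- A group `Γ` is *approximable* with respect to the family `G` if it admits an asymptotic
homomorphism `(idx, φ)` such that `liminf_n d(φ n g, 1) > 0` for every `g ≠ 1`. -/
def Approximable {I : Type*} (G : I → Type*) [∀ i, Group (G i)] [∀ i, MetricSpace (G i)]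
    (Γ : Type*) [Group Γ] : Prop :=
  ∃ (idx : ℕ → I) (φ : ∀ n, Γ → G (idx n)), IsAsymptoticHom G idx φ ∧
    ∀ g : Γ, g ≠ 1 → 0 < atTop.liminf (fun n => dist (φ n g) 1)

/-! Approximability passes to subgroups: precompose the asymptotic homomorphism with the
embedding. A non-identity element of `A` lying in `N` would normally generate a subgroup of `N`,
so for `N ≠ ⊤` the subgroup `A` embeds into `Γ ⧸ N`. -/

section

variable {I : Type*} {G : I → Type*} [∀ i, Group (G i)] [∀ i, MetricSpace (G i)]
  {H K : Type*} [Group H] [Group K]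

theorem IsAsymptoticHom.comp_monoidHom {idx : ℕ → I} {φ : ∀ n, K → G (idx n)}
    (hφ : IsAsymptoticHom G idx φ) (f : H →* K) :
    IsAsymptoticHom G idx (fun n => φ n ∘ f) := by
  intro g h
  simpa only [Function.comp_apply, map_mul] using hφ (f g) (f h)

theorem Approximable.of_injective (hK : Approximable G K) {f : H →* K}
    (hf : Function.Injective f) : Approximable G H := by
  obtain ⟨idx, φ, hφ, hsep⟩ := hK
  refine ⟨idx, fun n => φ n ∘ f, hφ.comp_monoidHom f, fun g hg => hsep (f g) ?_⟩
  exact (map_ne_one_iff f hf).mpr hg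

end

theorem Subgroup.injective_mk_comp_subtype_of_normalClosure_eq_top {Γ : Type*} [Group Γ]
    {A : Subgroup Γ} (hgen : ∀ a ∈ A, a ≠ 1 → Subgroup.normalClosure {a} = ⊤)
    {N : Subgroup Γ} [N.Normal] (hN : N ≠ ⊤) :
    Function.Injective ((QuotientGroup.mk' N).comp A.subtype) := by
  refine (injective_iff_map_eq_one _).mpr fun a ha => ?_
  by_contra ha1
  have haN : (a : Γ) ∈ N := (QuotientGroup.eq_one_iff _).mp ha
  have hclosure := hgen a a.2 (by simpa using ha1)
  refine hN (top_le_iff.mp ?_)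
  rw [← hclosure]
  exact Subgroup.normalClosure_le_normal (Set.singleton_subset_iff.mpr haN)

theorem no_approximable_quotient_of_nonapproximable_subgroup_general
    {I : Type*} (G : I → Type*) [∀ i, Group (G i)] [∀ i, MetricSpace (G i)]
    {Γ : Type*} [Group Γ] (A : Subgroup Γ)
    (hA : ¬ Approximable G ↥A)
    (hgen : ∀ a ∈ A, a ≠ 1 → Subgroup.normalClosure {a} = ⊤)
    (N : Subgroup Γ) [N.Normal] (hq : Approximable G (Γ ⧸ N)) :
    N = ⊤ := by
  by_contra hN
  exact hA (hq.of_injective (A.injective_mk_comp_subtype_of_normalClosure_eq_top hgen hN))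

/-- If `Γ` has a non-approximable subgroup `A` such that every non-identity element of `A`
normally generates `Γ`, then every approximable quotient of `Γ` is trivial. -/
theorem no_approximable_quotient_of_nonapproximable_subgroup
    {I : Type*} (G : I → Type*) [∀ i, Group (G i)] [∀ i, MetricSpace (G i)]
    (hbi : ∀ (i : I) (a x y : G i),
      dist (a * x) (a * y) = dist x y ∧ dist (x * a) (y * a) = dist x y)
    {Γ : Type*} [Group Γ] (A : Subgroup Γ)
    (hA : ¬ Approximable G ↥A)
    (hgen : ∀ a ∈ A, a ≠ 1 → Subgroup.normalClosure {a} = ⊤)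
    (N : Subgroup Γ) [N.Normal] (hq : Approximable G (Γ ⧸ N)) :
    N = ⊤ :=
  no_approximable_quotient_of_nonapproximable_subgroup_general G A hA hgen N hq
end

section
/- Let Γ be a group and Λ a subgroup of Γ such that (Γ, Λ, Λ) is a Cohen–Lyndon triple. Let k be a commutative ring and V a k-linear representation of Γ̄ := Γ/⟪Λ⟫, regarded as a representation of Γ via the quotient map π and as a (trivial) representation of Λ by restriction. If H^1(Γ; V) = 0, then there is an injective k-linear map from H^1(Λ; V) into H^2(Γ̄; V). -/
open Subgroup

/-- The conjugate of a subgroup `Λ` by any element lies in the normal closure of `Λ`. -/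
theorem conj_le_normalClosure {Γ : Type*} [Group Γ] (Λ : Subgroup Γ) (t : Γ) :
    Λ.map (MulAut.conj t).toMonoidHom ≤ Subgroup.normalClosure (Λ : Set Γ) := by
  rintro x ⟨y, hy, rfl⟩
  exact Subgroup.normalClosure_normal.conj_mem _ (subset_normalClosure hy) t

/-- `(Γ, Λ, Λ)` is a *Cohen–Lyndon triple* if there is a left transversal `T` of `Λ ⬝ ⟪Λ⟫` in `Γ`
such that the canonical homomorphism `∗_{t ∈ T} tΛt⁻¹ → ⟪Λ⟫` is an isomorphism. -/
def IsCohenLyndonTriple {Γ : Type*} [Group Γ] (Λ : Subgroup Γ) : Prop :=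
  ∃ T : Set Γ,
    (∀ g : Γ, ∃! t : T, (t : Γ)⁻¹ * g ∈ Λ ⊔ Subgroup.normalClosure (Λ : Set Γ)) ∧
    Function.Bijective
      (Monoid.CoprodI.lift fun t : T => inclusion (conj_le_normalClosure Λ (t : Γ)))

universe u

variable {Γ : Type u} [Group Γ] (Λ : Subgroup Γ) (k : Type u) [CommRing k]
  (V : Rep k (Γ ⧸ Subgroup.normalClosure (Λ : Set Γ)))

/-- A representation of `Γ ⧸ ⟪Λ⟫` regarded as a representation of `Γ` via the quotient map. -/
noncomputable def repOfQuotient : Rep k Γ :=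
  Rep.of (V.ρ.comp (QuotientGroup.mk' (Subgroup.normalClosure (Λ : Set Γ))))

/-- A representation of `Γ ⧸ ⟪Λ⟫` regarded as a representation of `Λ` by restricting the above. -/
noncomputable def repOfQuotientRes : Rep k ↥Λ :=
  Rep.of (V.ρ.comp ((QuotientGroup.mk' (Subgroup.normalClosure (Λ : Set Γ))).comp Λ.subtype))

/-!
This is the transgression step of the five-term exact sequence of `1 → ⟪Λ⟫ → Γ → Γ̄ → 1`.
A homomorphism `Φ : ⟪Λ⟫ → V` that is `Γ`-equivariant (for conjugation on `⟪Λ⟫`) turns the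
factor set `(a, b) ↦ s(a) s(b) s(ab)⁻¹` of a set-theoretic section `s` of `π` into a 2-cocycle
of `Γ̄`. If that cocycle is the coboundary of `u`, then `g ↦ Φ(g s(π g)⁻¹) + u(π g)` is a
1-cocycle of `Γ`; as `H¹(Γ; V) = 0` it is a coboundary, so it vanishes on `⟪Λ⟫`, and this
forces `Φ = 0`.

Restriction to `Λ` identifies equivariant homomorphisms `⟪Λ⟫ → V` with `Hom(Λ, V) = H¹(Λ; V)`:
it is injective because `⟪Λ⟫` is generated by the conjugates of `Λ`, and the Cohen–Lyndon
decomposition `⟪Λ⟫ ≅ ∗_{t ∈ T} tΛt⁻¹` extends `ψ : Λ → V` by `t l t⁻¹ ↦ t • ψ(l)`.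
-/

namespace QuotientGroup

variable {G : Type*} [Group G] {N : Subgroup G} [N.Normal]

noncomputable def mulOutInv (g : G) : N :=
  ⟨g * (g : G ⧸ N).out⁻¹, by simp [← eq_one_iff]⟩

noncomputable def factorSet (a b : G ⧸ N) : N :=
  ⟨a.out * b.out * (a * b).out⁻¹, by simp [← eq_one_iff]⟩

theorem factorSet_mul_factorSet (a b c : G ⧸ N) :
    factorSet a b * factorSet (a * b) c =
      MulAut.conjNormal a.out (factorSet b c) * factorSet a (b * c) := by
  ext
  simp only [factorSet, Subgroup.coe_mul, MulAut.conjNormal_apply, mul_assoc]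
  group

theorem mulOutInv_mul (g h : G) :
    mulOutInv (N := N) (g * h) =
      mulOutInv g * MulAut.conjNormal (g : G ⧸ N).out (mulOutInv h) * factorSet g h := by
  ext
  simp only [mulOutInv, factorSet, Subgroup.coe_mul, MulAut.conjNormal_apply, mk_mul]
  group

theorem mulOutInv_coe (n : N) : mulOutInv (n : G) = n * mulOutInv 1 := by
  ext
  simp [mulOutInv, (eq_one_iff _).2 n.2]

end QuotientGroup

namespace Subgroup

theorem normalClosure_monoidHom_ext {G M : Type*} [Group G] [Group M] {s : Set G}
    {F₁ F₂ : normalClosure s →* M}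
    (h : ∀ (g x : G) (hx : x ∈ s), F₁ (MulAut.conjNormal g ⟨x, subset_normalClosure hx⟩) =
      F₂ (MulAut.conjNormal g ⟨x, subset_normalClosure hx⟩)) :
    F₁ = F₂ := by
  ext ⟨n, hn⟩
  induction hn using closure_induction with
  | mem x hx =>
    obtain ⟨y, hy, hc⟩ := Group.mem_conjugatesOfSet_iff.1 hx
    obtain ⟨g, rfl⟩ := isConj_iff.1 hc
    exact h g y hy
  | one => exact (map_one F₁).trans (map_one F₂).symm
  | mul x y hx hy ihx ihy =>
    change F₁ (⟨x, hx⟩ * ⟨y, hy⟩) = F₂ (⟨x, hx⟩ * ⟨y, hy⟩)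
    rw [map_mul, map_mul, ihx, ihy]
  | inv x hx ihx =>
    change F₁ ⟨x, hx⟩⁻¹ = F₂ ⟨x, hx⟩⁻¹
    rw [map_inv, map_inv, ihx]

end Subgroup

namespace groupCohomology

open QuotientGroup

section Transgression

variable {Γ k : Type u} [Group Γ] {N : Subgroup Γ} [N.Normal] [CommRing k]
  (V : Rep k (Γ ⧸ N))

def equivariantHoms : Submodule k (Additive N →+ V) where
  carrier := {Φ | ∀ (g : Γ) (n : N),
    Φ (.ofMul (MulAut.conjNormal g n)) = V.ρ (g : Γ ⧸ N) (Φ (.ofMul n))}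
  add_mem' hΦ hΨ g n := by simp [hΦ g n, hΨ g n]
  zero_mem' := by simp
  smul_mem' c Φ hΦ g n := by simp [hΦ g n]

variable {V}

theorem apply_factorSet_mem_cocycles₂ (Φ : equivariantHoms V) :
    (fun p : (Γ ⧸ N) × (Γ ⧸ N) ↦ Φ.1 (.ofMul (factorSet p.1 p.2))) ∈ cocycles₂ V := by
  refine (mem_cocycles₂_iff _).2 fun a b c ↦ ?_
  have := congrArg (fun n ↦ Φ.1 (.ofMul n)) (factorSet_mul_factorSet a b c)
  simp only [ofMul_mul, map_add, Φ.2 _, out_eq'] at this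
  rwa [add_comm]

variable (V) in
noncomputable def transgression : equivariantHoms V →ₗ[k] H2 V :=
  (H2π V).hom ∘ₗ
    { toFun Φ := ⟨_, apply_factorSet_mem_cocycles₂ Φ⟩
      map_add' _ _ := rfl
      map_smul' _ _ := rfl }

theorem cocycles₁_apply_eq_zero_of_mem
    (hH1 : Subsingleton (H1 (Rep.of (V.ρ.comp (QuotientGroup.mk' N)))))
    (f : cocycles₁ (Rep.of (V.ρ.comp (QuotientGroup.mk' N)))) {g : Γ} (hg : g ∈ N) :
    f g = 0 := by
  obtain ⟨v, hv⟩ := (H1π_eq_zero_iff f).1 (Subsingleton.elim _ _)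
  rw [← congrFun hv g]
  simp [(eq_one_iff g).2 hg]

theorem mulOutInv_add_mem_cocycles₁ (Φ : equivariantHoms V) (u : Γ ⧸ N → V)
    (hu : ∀ a b, Φ.1 (.ofMul (factorSet a b)) = V.ρ a (u b) - u (a * b) + u a) :
    (fun g : Γ ↦ Φ.1 (.ofMul (mulOutInv g)) + u g) ∈
      cocycles₁ (Rep.of (V.ρ.comp (QuotientGroup.mk' N))) := by
  refine (mem_cocycles₁_iff _).2 fun g h ↦ ?_
  change _ = V.ρ (g : Γ ⧸ N) _ + _
  rw [mulOutInv_mul, ofMul_mul, ofMul_mul, map_add, map_add, Φ.2, out_eq', hu, mk_mul, map_add]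
  abel

theorem transgression_injective
    (hH1 : Subsingleton (H1 (Rep.of (V.ρ.comp (QuotientGroup.mk' N))))) :
    Function.Injective (transgression V) := by
  refine (injective_iff_map_eq_zero _).2 fun Φ hΦ ↦ ?_
  obtain ⟨u, hu⟩ := (H2π_eq_zero_iff _).1 hΦ
  have hF (g : Γ) (hg : g ∈ N) : Φ.1 (.ofMul (mulOutInv g)) + u g = 0 :=
    cocycles₁_apply_eq_zero_of_mem hH1
      ⟨_, mulOutInv_add_mem_cocycles₁ Φ u fun a b ↦ (congrFun hu (a, b)).symm⟩ hg
  ext n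
  change Φ.1 (.ofMul n) = 0
  have h1 := hF 1 (one_mem N)
  have hn := hF n n.2
  rw [mk_one] at h1
  rwa [mulOutInv_coe, ofMul_mul, map_add, (eq_one_iff _).2 n.2, add_assoc, h1, add_zero] at hn

end Transgression

section Restriction

variable {Γ k : Type u} [Group Γ] {Λ : Subgroup Γ} [CommRing k]
  (V : Rep k (Γ ⧸ normalClosure (Λ : Set Γ)))

def restrictEquivariantHoms : equivariantHoms V →ₗ[k] (Additive Λ →+ V) where
  toFun Φ := Φ.1.comp (MonoidHom.toAdditive (inclusion le_normalClosure))
  map_add' _ _ := rfl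
  map_smul' _ _ := rfl

theorem restrictEquivariantHoms_injective : Function.Injective (restrictEquivariantHoms V) := by
  refine (injective_iff_map_eq_zero _).2 fun Φ hΦ ↦ Subtype.ext ?_
  refine AddMonoidHom.toMultiplicativeRight.injective (normalClosure_monoidHom_ext fun g x hx ↦ ?_)
  change Multiplicative.ofAdd (Φ.1 _) = Multiplicative.ofAdd 0
  rw [Φ.2, show Φ.1 (.ofMul ⟨x, _⟩) = 0 from DFunLike.congr_fun hΦ (.ofMul ⟨x, hx⟩), map_zero]

end Restriction

end groupCohomology

namespace IsCohenLyndonTriple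

open groupCohomology

variable {Γ k : Type u} [Group Γ] {Λ : Subgroup Γ} [CommRing k]
  {V : Rep k (Γ ⧸ normalClosure (Λ : Set Γ))}

noncomputable def equivMapConj (t : Γ) : Λ ≃* Λ.map (MulAut.conj t).toMonoidHom :=
  Λ.equivMapOfInjective _ (MulAut.conj t).injective

noncomputable def factorHom (ψ : Additive Λ →+ V) (t : Γ) :
    Λ.map (MulAut.conj t).toMonoidHom →* Multiplicative V :=
  (AddMonoidHom.toMultiplicative (V.ρ (t : Γ ⧸ normalClosure (Λ : Set Γ))).toAddMonoidHom).comp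
    ((AddMonoidHom.toMultiplicativeRight ψ).comp (equivMapConj t).symm.toMonoidHom)

variable {T : Set Γ}
  (hbij : Function.Bijective
    (Monoid.CoprodI.lift fun t : T ↦ inclusion (conj_le_normalClosure Λ (t : Γ))))

noncomputable def extension (ψ : Additive Λ →+ V) :
    normalClosure (Λ : Set Γ) →* Multiplicative V :=
  (Monoid.CoprodI.lift fun t : T ↦ factorHom ψ t).comp
    (MulEquiv.ofBijective _ hbij).symm.toMonoidHom

theorem extension_conjNormal_of_mem (ψ : Additive Λ →+ V) (t : T) (l : Λ) :
    extension hbij ψ (MulAut.conjNormal (t : Γ) ⟨l, le_normalClosure l.2⟩) =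
      .ofAdd (V.ρ (t : Γ) (ψ (.ofMul l))) := by
  have : (MulEquiv.ofBijective _ hbij).symm (MulAut.conjNormal (t : Γ) ⟨l, le_normalClosure l.2⟩) =
      Monoid.CoprodI.of (i := t) (equivMapConj (t : Γ) l) := by
    rw [MulEquiv.symm_apply_eq, MulEquiv.ofBijective_apply, Monoid.CoprodI.lift_of]
    rfl
  rw [extension, MonoidHom.comp_apply, MulEquiv.coe_toMonoidHom, this, Monoid.CoprodI.lift_of,
    factorHom, MonoidHom.comp_apply, MonoidHom.comp_apply, MulEquiv.coe_toMonoidHom,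
    MulEquiv.symm_apply_apply]
  rfl

theorem extension_conjNormal
    (hT : ∀ g : Γ, ∃ t ∈ T, t⁻¹ * g ∈ normalClosure (Λ : Set Γ)) (ψ : Additive Λ →+ V)
    (g l : Γ) (hl : l ∈ Λ) :
    extension hbij ψ (MulAut.conjNormal g ⟨l, subset_normalClosure hl⟩) =
      .ofAdd (V.ρ g (ψ (.ofMul ⟨l, hl⟩))) := by
  obtain ⟨t, ht, hn⟩ := hT g
  -- `g = t n` with `n ∈ ⟪Λ⟫`, and conjugation inside `⟪Λ⟫` is invisible in the abelian group `V`
  set m := MulAut.conjNormal t ⟨t⁻¹ * g, hn⟩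
  have hconj : MulAut.conjNormal g ⟨l, subset_normalClosure hl⟩ =
      m * MulAut.conjNormal t ⟨l, subset_normalClosure hl⟩ * m⁻¹ := by
    ext
    simp only [m, MulAut.conjNormal_apply, coe_mul, coe_inv]
    group
  have hgt : (g : Γ ⧸ normalClosure (Λ : Set Γ)) = t := (QuotientGroup.eq.2 hn).symm
  rw [hconj, map_mul, map_mul, map_inv, mul_inv_cancel_comm, hgt]
  exact extension_conjNormal_of_mem hbij ψ ⟨t, ht⟩ ⟨l, hl⟩

theorem extension_mem_equivariantHoms
    (hT : ∀ g : Γ, ∃ t ∈ T, t⁻¹ * g ∈ normalClosure (Λ : Set Γ)) (ψ : Additive Λ →+ V) :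
    MonoidHom.toAdditiveLeft (extension hbij ψ) ∈ equivariantHoms V := by
  intro g n
  have : (extension hbij ψ).comp (MulAut.conjNormal g).toMonoidHom =
      (AddMonoidHom.toMultiplicative (V.ρ g).toAddMonoidHom).comp (extension hbij ψ) := by
    refine normalClosure_monoidHom_ext fun x l hl ↦ ?_
    simp only [MonoidHom.comp_apply, MulEquiv.coe_toMonoidHom, ← MulAut.mul_apply, ← map_mul]
    rw [extension_conjNormal hbij hT ψ _ l hl, extension_conjNormal hbij hT ψ _ l hl,
      QuotientGroup.mk_mul, map_mul]
    rfl
  exact congrArg Multiplicative.toAdd (DFunLike.congr_fun this n)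

variable (V) in
theorem restrictEquivariantHoms_surjective (hCL : IsCohenLyndonTriple Λ) :
    Function.Surjective (restrictEquivariantHoms V) := by
  obtain ⟨T, hT, hbij⟩ := hCL
  have hcover (g : Γ) : ∃ t ∈ T, t⁻¹ * g ∈ normalClosure (Λ : Set Γ) := by
    obtain ⟨t, ht, -⟩ := hT g
    rw [sup_eq_right.2 le_normalClosure] at ht
    exact ⟨t, t.2, ht⟩
  refine fun ψ ↦ ⟨⟨_, extension_mem_equivariantHoms hbij hcover ψ⟩, ?_⟩
  ext l
  have := congrArg Multiplicative.toAdd (extension_conjNormal hbij hcover ψ 1 l l.2)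
  simp only [map_one, MulAut.one_apply, QuotientGroup.mk_one, Module.End.one_apply] at this
  exact this

end IsCohenLyndonTriple

instance : (repOfQuotientRes Λ k V).IsTrivial where
  out g := by
    ext x
    change V.ρ (g : Γ) x = x
    rw [(QuotientGroup.eq_one_iff _).2 (le_normalClosure g.2), map_one]
    rfl

/-- If `(Γ, Λ, Λ)` is a Cohen–Lyndon triple, `V` is a representation of `Γ̄ = Γ ⧸ ⟪Λ⟫`, and
`H¹(Γ; V) = 0`, then `H¹(Λ; V)` embeds `k`-linearly into `H²(Γ̄; V)`. -/
theorem exists_injective_map_of_isCohenLyndonTriple (hCL : IsCohenLyndonTriple Λ)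
    (hH1 : Subsingleton (groupCohomology.H1 (repOfQuotient Λ k V))) :
    ∃ δ : groupCohomology.H1 (repOfQuotientRes Λ k V) →ₗ[k] groupCohomology.H2 V,
      Function.Injective δ := by
  let restrict := LinearEquiv.ofBijective (groupCohomology.restrictEquivariantHoms V)
    ⟨groupCohomology.restrictEquivariantHoms_injective V, hCL.restrictEquivariantHoms_surjective V⟩
  let H1Equiv := (groupCohomology.H1IsoOfIsTrivial (repOfQuotientRes Λ k V)).toLinearEquiv
  exact ⟨groupCohomology.transgression V ∘ₗ restrict.symm.toLinearMap ∘ₗ H1Equiv.toLinearMap,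
    (groupCohomology.transgression_injective hH1).comp
      (restrict.symm.injective.comp H1Equiv.injective)⟩
end

section
/- Let Γ be a group and Λ an infinite cyclic subgroup of Γ such that (Γ, Λ, Λ) is a Cohen–Lyndon triple. Let k be a commutative ring and V a nonzero k-linear representation of Γ̄ := Γ/⟪Λ⟫, regarded as a representation of Γ via the quotient map π. If H^1(Γ; V) = 0, then H^2(Γ̄; V) ≠ 0. -/
/-!
Write `N = ⟪Λ⟫`. Since `N` is the free product of the conjugates `tΛt⁻¹` (`t ∈ T`), a
homomorphism `ψ : Λ → V` extends to `φ : N → V` by `tλt⁻¹ ↦ t • ψ λ`; because `T` is a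
transversal of `N` and `V` is abelian, `φ` is `Γ`-equivariant, and `φ ≠ 0` as soon as `ψ ≠ 0`,
which for `Λ ≅ ℤ` and `V ≠ 0` can be arranged.

Pushing the factor set of the extension `N → Γ → Γ̄` forward along `φ` gives a 2-cocycle on `Γ̄`.
If it were a coboundary, `φ` would extend to a 1-cocycle on `Γ`. Since `H¹(Γ; V) = 0` that
cocycle is a coboundary, so it vanishes on `N`, which acts trivially on `V`; hence `φ = 0`.
-/

open Subgroup

universe u

variable {Γ : Type u} [Group Γ] (Λ : Subgroup Γ) (k : Type u) [CommRing k]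
  (V : Rep k (Γ ⧸ Subgroup.normalClosure (Λ : Set Γ)))

open groupCohomology

theorem cocycles₁_apply_eq_zero_of_subsingleton {k G : Type u} [CommRing k] [Group G]
    {A : Rep k G} (hA : Subsingleton (H1 A)) (f : cocycles₁ A) {g : G} (hg : A.ρ g = 1) :
    f g = 0 := by
  obtain ⟨x, hx⟩ := (H1π_eq_zero_iff f).1 (Subsingleton.elim _ _)
  rw [← congrFun hx g, d₀₁_hom_apply, hg, Module.End.one_apply, sub_self]

theorem map_conjNormal_of_mem {G : Type*} [Group G] {N : Subgroup G} [N.Normal] {M : Type*}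
    [CommGroup M] (φ : N →* M) {a : G} (ha : a ∈ N) (n : N) :
    φ (MulAut.conjNormal a n) = φ n := by
  have h : MulAut.conjNormal a n = ⟨a, ha⟩ * n * ⟨a, ha⟩⁻¹ := Subtype.ext (by simp)
  rw [h, map_mul, map_mul, map_inv, mul_inv_cancel_comm]

theorem exists_monoidHom_ne_one_of_isCyclic {C M : Type*} [Group C] [IsCyclic C] [Infinite C]
    [Group M] [Nontrivial M] : ∃ ψ : C →* M, ψ ≠ 1 := by
  obtain ⟨m, hm⟩ := exists_ne (1 : M)
  refine ⟨(zpowersHom M m).comp intCyclicMulEquiv.symm.toMonoidHom, fun h => hm ?_⟩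
  simpa using DFunLike.congr_fun h (intCyclicMulEquiv (Multiplicative.ofAdd 1))

noncomputable section Transgression

variable {G : Type u} [Group G] {N : Subgroup G} [N.Normal] {k} {A : Rep k (G ⧸ N)}

abbrev inflation (A : Rep k (G ⧸ N)) : Rep k G := Rep.of (A.ρ.comp (QuotientGroup.mk' N))

def IsConjEquivariant (φ : N →* Multiplicative A) : Prop :=
  ∀ (g : G) (n : N), (φ (MulAut.conjNormal g n)).toAdd = A.ρ (g : G ⧸ N) (φ n).toAdd

variable (N) in
def factorSet (p q : G ⧸ N) : N :=
  ⟨p.out * q.out * (p * q).out⁻¹, by rw [← QuotientGroup.eq_one_iff]; simp⟩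

theorem factorSet_mul_factorSet (p q r : G ⧸ N) :
    factorSet N p q * factorSet N (p * q) r =
      MulAut.conjNormal p.out (factorSet N q r) * factorSet N p (q * r) :=
  Subtype.ext <| by simp [factorSet, mul_assoc]

def transgression (φ : N →* Multiplicative A) (pq : (G ⧸ N) × (G ⧸ N)) : A :=
  (φ (factorSet N pq.1 pq.2)).toAdd

theorem transgression_mem_cocycles₂ {φ : N →* Multiplicative A} (hφ : IsConjEquivariant φ) :
    transgression φ ∈ cocycles₂ A := by
  refine (mem_cocycles₂_iff _).2 fun p q r => ?_
  have h := congrArg (fun n => (φ n).toAdd) (factorSet_mul_factorSet p q r)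
  simp only [map_mul, toAdd_mul] at h
  rw [hφ, QuotientGroup.out_eq'] at h
  exact (add_comm _ _).trans h

variable (N) in
def mulOutInv (g : G) : N :=
  ⟨g * (g : G ⧸ N).out⁻¹, by rw [← QuotientGroup.eq_one_iff]; simp⟩

theorem mulOutInv_mul (g h : G) :
    mulOutInv N (g * h) = mulOutInv N g * MulAut.conjNormal (g : G ⧸ N).out (mulOutInv N h) *
      factorSet N g h :=
  Subtype.ext <| by simp [mulOutInv, factorSet, mul_assoc]

theorem mulOutInv_coe (n : N) : mulOutInv N (n : G) = n * mulOutInv N 1 :=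
  Subtype.ext <| by simp [mulOutInv, (QuotientGroup.eq_one_iff _).2 n.2]

theorem exists_cocycles₁_eq_of_transgression_mem_coboundaries₂ {φ : N →* Multiplicative A}
    (hφ : IsConjEquivariant φ) (h : transgression φ ∈ coboundaries₂ A) :
    ∃ F : cocycles₁ (inflation A), ∀ n : N, F n = (φ n).toAdd := by
  obtain ⟨β, hβ⟩ := h
  have hβ' (p q : G ⧸ N) : A.ρ p (β q) - β (p * q) + β p = (φ (factorSet N p q)).toAdd :=
    congrFun hβ (p, q)
  -- `β` trivializes the pushed-forward factor set, so it corrects `φ ∘ mulOutInv N` to a cocycle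
  set F : G → inflation A := fun g => (φ (mulOutInv N g)).toAdd + β g
  have hF : F ∈ cocycles₁ (inflation A) := (mem_cocycles₁_iff (A := inflation A) F).2 fun g h => by
    simp only [F, mulOutInv_mul, map_mul, toAdd_mul, MonoidHom.comp_apply,
      QuotientGroup.mk'_apply]
    rw [hφ, QuotientGroup.out_eq', ← hβ', map_add, QuotientGroup.mk_mul]
    abel
  refine ⟨⟨F, hF⟩, fun n => ?_⟩
  have hF1 : F 1 = 0 := cocycles₁_map_one (A := inflation A) ⟨F, hF⟩
  have hn : ((n : G) : G ⧸ N) = ((1 : G) : G ⧸ N) := (QuotientGroup.eq_one_iff _).2 n.2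
  change F n = _
  simp only [F, mulOutInv_coe, map_mul, toAdd_mul, hn] at hF1 ⊢
  rw [add_assoc, hF1, add_zero]

theorem nontrivial_H2_of_isConjEquivariant {φ : N →* Multiplicative A} (hφ : IsConjEquivariant φ)
    (hφ1 : φ ≠ 1) (hH1 : Subsingleton (H1 (inflation A))) : Nontrivial (H2 A) := by
  refine ⟨H2π A ⟨transgression φ, transgression_mem_cocycles₂ hφ⟩, 0, fun h => hφ1 ?_⟩
  obtain ⟨F, hF⟩ :=
    exists_cocycles₁_eq_of_transgression_mem_coboundaries₂ hφ ((H2π_eq_zero_iff _).1 h)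
  refine MonoidHom.ext fun n => Multiplicative.toAdd.injective ?_
  have hn : (inflation A).ρ n = 1 := by
    simp [(QuotientGroup.eq_one_iff _).2 n.2]
  rw [← hF n, cocycles₁_apply_eq_zero_of_subsingleton hH1 F hn]
  rfl

end Transgression

namespace IsCohenLyndonTriple

variable {Λ k V}

noncomputable def conjSubgroupHom (ψ : Λ →* Multiplicative V) (t : Γ) :
    Λ.map (MulAut.conj t).toMonoidHom →* Multiplicative V :=
  (V.ρ (t : Γ ⧸ normalClosure (Λ : Set Γ))).toAddMonoidHom.toMultiplicative.comp <| ψ.comp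
    (equivMapOfInjective Λ (MulAut.conj t).toMonoidHom (MulAut.conj t).injective).symm.toMonoidHom

variable {T : Set Γ} (hT : Function.Bijective
  (Monoid.CoprodI.lift fun t : T => inclusion (conj_le_normalClosure Λ t)))

noncomputable def extendHom (ψ : Λ →* Multiplicative V) :
    normalClosure (Λ : Set Γ) →* Multiplicative V :=
  (Monoid.CoprodI.lift fun t : T => conjSubgroupHom ψ t).comp
    (MulEquiv.ofBijective _ hT).symm.toMonoidHom

theorem extendHom_comp_lift (ψ : Λ →* Multiplicative V) :
    (extendHom hT ψ).comp
        (Monoid.CoprodI.lift fun t : T => inclusion (conj_le_normalClosure Λ t)) =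
      Monoid.CoprodI.lift fun t : T => conjSubgroupHom ψ t := by
  refine MonoidHom.ext fun w => ?_
  change Monoid.CoprodI.lift (fun t : T => conjSubgroupHom ψ t)
    ((MulEquiv.ofBijective _ hT).symm (MulEquiv.ofBijective _ hT w)) = _
  rw [MulEquiv.symm_apply_apply]

theorem lift_of_conj (t : T) (l : Λ) :
    Monoid.CoprodI.lift (fun t : T => inclusion (conj_le_normalClosure Λ t))
        (Monoid.CoprodI.of (i := t) ⟨_, l, l.2, rfl⟩) =
      MulAut.conjNormal (t : Γ) (inclusion le_normalClosure l) := by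
  rw [Monoid.CoprodI.lift_of]
  rfl

theorem extendHom_conjNormal (ψ : Λ →* Multiplicative V) (t : T) (l : Λ) :
    (extendHom hT ψ (MulAut.conjNormal (t : Γ) (inclusion le_normalClosure l))).toAdd =
      V.ρ (t : Γ ⧸ normalClosure (Λ : Set Γ)) (ψ l).toAdd := by
  have hsymm : (equivMapOfInjective Λ (MulAut.conj (t : Γ)).toMonoidHom
      (MulAut.conj (t : Γ)).injective).symm ⟨_, l, l.2, rfl⟩ = l :=
    (MulEquiv.symm_apply_eq _).2 rfl
  rw [← lift_of_conj, ← MonoidHom.comp_apply, extendHom_comp_lift, Monoid.CoprodI.lift_of,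
    conjSubgroupHom, MonoidHom.comp_apply, MonoidHom.comp_apply, MulEquiv.coe_toMonoidHom, hsymm]
  rfl

theorem exists_transversal_mk_eq
    (htrans : ∀ g : Γ, ∃! t : T, (t : Γ)⁻¹ * g ∈ Λ ⊔ normalClosure (Λ : Set Γ)) (g : Γ) : ∃ t : T, (t : Γ ⧸ normalClosure (Λ : Set Γ)) = g := by
  obtain ⟨t, ht, -⟩ := htrans g
  rw [sup_eq_right.2 le_normalClosure] at ht
  exact ⟨t, QuotientGroup.eq.2 ht⟩

theorem isConjEquivariant_extendHom
    (htrans : ∀ g : Γ, ∃! t : T, (t : Γ)⁻¹ * g ∈ Λ ⊔ normalClosure (Λ : Set Γ))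
    (ψ : Λ →* Multiplicative V) : IsConjEquivariant (extendHom hT ψ) := by
  intro g n
  suffices key : (extendHom hT ψ).comp (MulAut.conjNormal g).toMonoidHom =
      (V.ρ (g : Γ ⧸ normalClosure (Λ : Set Γ))).toAddMonoidHom.toMultiplicative.comp
        (extendHom hT ψ) from
    congrArg Multiplicative.toAdd (DFunLike.congr_fun key n)
  refine (MonoidHom.cancel_right hT.2).1 (Monoid.CoprodI.ext_hom _ _ fun t => ?_)
  refine MonoidHom.ext fun ⟨_, l, hl, rfl⟩ => Multiplicative.toAdd.injective ?_
  -- write `g * t = a * t'` with `t' ∈ T` and `a ∈ N`; conjugation by `a` is invisible to `φ`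
  obtain ⟨t', ht'⟩ := exists_transversal_mk_eq htrans (g * t)
  have ha : g * t * (t' : Γ)⁻¹ ∈ normalClosure (Λ : Set Γ) := by
    rw [← QuotientGroup.eq_one_iff, QuotientGroup.mk_mul, QuotientGroup.mk_inv, ← ht',
      mul_inv_cancel]
  set x := inclusion le_normalClosure (⟨l, hl⟩ : Λ)
  have hconj : MulAut.conjNormal g (MulAut.conjNormal (t : Γ) x) =
      MulAut.conjNormal (g * t * (t' : Γ)⁻¹) (MulAut.conjNormal (t' : Γ) x) :=
    Subtype.ext <| by simp only [MulAut.conjNormal_apply]; group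
  simp only [MonoidHom.comp_apply]
  rw [lift_of_conj t ⟨l, hl⟩, MulEquiv.coe_toMonoidHom, hconj,
    map_conjNormal_of_mem (extendHom hT ψ) ha, extendHom_conjNormal]
  change _ = V.ρ _ (extendHom hT ψ (MulAut.conjNormal (t : Γ) x)).toAdd
  rw [extendHom_conjNormal, ht', QuotientGroup.mk_mul, map_mul, Module.End.mul_apply]

theorem extendHom_inclusion
    (htrans : ∀ g : Γ, ∃! t : T, (t : Γ)⁻¹ * g ∈ Λ ⊔ normalClosure (Λ : Set Γ))
    (ψ : Λ →* Multiplicative V) (l : Λ) :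
    extendHom hT ψ (inclusion le_normalClosure l) = ψ l := by
  obtain ⟨t₀, ht₀⟩ := exists_transversal_mk_eq htrans 1
  rw [QuotientGroup.mk_one] at ht₀
  have ht₀N : (t₀ : Γ) ∈ normalClosure (Λ : Set Γ) := (QuotientGroup.eq_one_iff _).1 ht₀
  apply Multiplicative.toAdd.injective
  rw [← map_conjNormal_of_mem _ ht₀N, extendHom_conjNormal, ht₀, map_one,
    Module.End.one_apply]

theorem exists_isConjEquivariant_extension (hCL : IsCohenLyndonTriple Λ)
    (ψ : Λ →* Multiplicative V) :
    ∃ φ : normalClosure (Λ : Set Γ) →* Multiplicative V,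
      IsConjEquivariant φ ∧ ∀ l : Λ, φ (inclusion le_normalClosure l) = ψ l := by
  obtain ⟨T, htrans, hT⟩ := hCL
  exact ⟨extendHom hT ψ, isConjEquivariant_extendHom hT htrans ψ,
    extendHom_inclusion hT htrans ψ⟩

end IsCohenLyndonTriple

/-- If `(Γ, Λ, Λ)` is a Cohen–Lyndon triple with `Λ` infinite cyclic, `V` is a nonzero
representation of `Γ̄ = Γ ⧸ ⟪Λ⟫`, and `H¹(Γ; V) = 0`, then `H²(Γ̄; V) ≠ 0`. -/
theorem H2_nontrivial_of_isCohenLyndonTriple (hCL : IsCohenLyndonTriple Λ)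
    (hcyc : ∃ x : Γ, Subgroup.zpowers x = Λ) (hinf : Infinite ↥Λ)
    (hV : Nontrivial V) (hH1 : Subsingleton (groupCohomology.H1 (repOfQuotient Λ k V))) :
    Nontrivial (groupCohomology.H2 V) := by
  obtain ⟨x, rfl⟩ := hcyc
  obtain ⟨ψ, hψ⟩ := exists_monoidHom_ne_one_of_isCyclic (C := zpowers x) (M := Multiplicative V)
  obtain ⟨φ, hφ, hφψ⟩ := hCL.exists_isConjEquivariant_extension ψ
  refine nontrivial_H2_of_isConjEquivariant hφ ?_ hH1
  rintro rfl
  exact hψ (MonoidHom.ext fun l => (hφψ l).symm)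
end

section
/- Let Γ be a group and S a subgroup of Γ that is simple (S is nontrivial and its only normal subgroups are the trivial subgroup and S itself) and whose normal closure in Γ is all of Γ. Then for every s ∈ S with s ≠ 1, the normal closure of {s} in Γ is all of Γ; that is, every non-identity element of S normally generates Γ. -/
theorem Subgroup.le_of_isSimpleGroup_of_mem_of_ne_one {Γ : Type*} [Group Γ] {S N : Subgroup Γ}
    [N.Normal] (hS : IsSimpleGroup S) {s : Γ} (hsS : s ∈ S) (hsN : s ∈ N) (hs : s ≠ 1) :
    S ≤ N := by
  have hne_bot : N.subgroupOf S ≠ ⊥ := fun hbot => by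
    have hmem : (⟨s, hsS⟩ : S) ∈ N.subgroupOf S := hsN
    rw [hbot, Subgroup.mem_bot] at hmem
    exact hs (congrArg Subtype.val hmem)
  rw [← Subgroup.subgroupOf_eq_top]
  exact (hS.eq_bot_or_eq_top_of_normal _ inferInstance).resolve_left hne_bot

/-- If `S` is a simple subgroup of `Γ` whose normal closure is all of `Γ`, then every
non-identity element of `S` normally generates `Γ`. -/
theorem normalClosure_singleton_eq_top_of_simple
    {Γ : Type*} [Group Γ] (S : Subgroup Γ) (hS : IsSimpleGroup ↥S)
    (hgen : Subgroup.normalClosure (S : Set Γ) = ⊤) :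
    ∀ s ∈ S, s ≠ 1 → Subgroup.normalClosure {s} = ⊤ := by
  intro s hsS hs
  have hS_le : S ≤ Subgroup.normalClosure {s} :=
    Subgroup.le_of_isSimpleGroup_of_mem_of_ne_one hS hsS
      (Subgroup.subset_normalClosure rfl) hs
  rw [eq_top_iff, ← hgen]
  exact Subgroup.normalClosure_le_normal hS_le
end

section
/- For every group C, the free product C ∗ ℤ has no non-trivial finite normal subgroup: every normal subgroup of C ∗ ℤ that is finite (as a set) is the trivial subgroup. -/
/-!
Let `x ≠ 1` lie in a finite normal subgroup `N` of `G ∗ H`, with `H` nontrivial and torsion-free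
(here `H = ℤ`). Conjugation by `t ∈ H \ {1}` permutes the finite set `N`, so some power
`tⁿ ≠ 1` commutes with `x`. In a free product the centraliser of a nontrivial element of a factor
lies in that factor: writing `x = a c b` with `a, b` in that factor and `c` a reduced word that
begins and ends outside it, the reduced words of `tⁿ x` and `x tⁿ` begin in different factors
unless `x = a`. Hence `x ∈ H` has finite order, so `x = 1`.
-/

namespace Monoid.CoprodI

variable {ι : Type*} {G : ι → Type*} [∀ i, Group (G i)]

namespace NeWord

theorem fst_eq_of_prod_eq {i j i' j' : ι} {w : NeWord G i j} {w' : NeWord G i' j'}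
    (h : w.prod = w'.prod) : i = i' := by
  classical
  have hw : w.toWord = w'.toWord := Word.equiv.symm.injective h
  have := congrArg (fun v : Word G => v.toList.head?) hw
  simp only [toWord, toList_head?, Option.some.injEq] at this
  exact congrArg Sigma.fst this

theorem prod_eq_of_last_or_exists_mul_of_last {i j : ι} (w : NeWord G i j) :
    (i = j ∧ w.prod = of w.last) ∨
      ∃ (k : ι) (w' : NeWord G i k), k ≠ j ∧ w.prod = w'.prod * of w.last := by
  induction w with
  | singleton x hx => exact .inl ⟨rfl, prod_singleton x hx⟩
  | @append i j k l w₁ hjk w₂ _ ih₂ =>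
    right
    rcases ih₂ with ⟨rfl, h₂⟩ | ⟨m, w₂', hml, h₂⟩
    · exact ⟨j, w₁, hjk, by rw [append_prod, h₂, append_last]⟩
    · exact ⟨m, append w₁ hjk w₂', hml, by rw [append_prod, append_prod, h₂, append_last, mul_assoc]⟩

theorem fstIdx_toWord {i j : ι} (w : NeWord G i j) : w.toWord.fstIdx = some i := by
  simp [Word.fstIdx, toWord]

end NeWord

theorem mem_range_of_or_exists_neWord (i : ι) (y : CoprodI G) :
    y ∈ (of : G i →* _).range ∨ ∃ (a b : G i) (j k : ι) (c : NeWord G j k),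
      j ≠ i ∧ k ≠ i ∧ y = of a * c.prod * of b := by
  classical
  set p := Word.equivPair i (Word.equiv y)
  have hy : y = of p.head * p.tail.prod := by
    rw [← Word.prod_rcons, ← Word.equivPair_symm, Equiv.symm_apply_apply]
    exact (Word.equiv.symm_apply_apply y).symm
  by_cases htail : p.tail = Word.empty
  · exact .inl ⟨p.head, by rw [hy, htail, Word.prod_empty, mul_one]⟩
  obtain ⟨j, k, c, hc⟩ := NeWord.of_word p.tail htail
  have hj : j ≠ i := fun hji => p.fstIdx_ne (by rw [← hc, c.fstIdx_toWord, hji])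
  replace hy : y = of p.head * c.prod := by rw [hy, ← hc]; rfl
  right
  by_cases hk : k = i
  · subst hk
    rcases c.prod_eq_of_last_or_exists_mul_of_last with ⟨hjk, -⟩ | ⟨k, c', hk, hc'⟩
    · exact absurd hjk hj
    · exact ⟨p.head, c.last, j, k, c', hj, hk, by rw [hy, hc', mul_assoc]⟩
  · exact ⟨p.head, 1, j, k, c, hj, hk, by rw [hy, map_one, mul_one]⟩

theorem of_mul_prod_ne_prod_mul_of {i j k : ι} {c : NeWord G j k} (hj : j ≠ i) (hk : k ≠ i)
    {u : G i} (hu : u ≠ 1) (v : G i) : of u * c.prod ≠ c.prod * of v := by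
  intro h
  have hleft : of u * c.prod = (NeWord.append (.singleton u hu) hj.symm c).prod := by simp
  rcases eq_or_ne v 1 with rfl | hv
  · rw [map_one, mul_one, hleft] at h
    exact hj (NeWord.fst_eq_of_prod_eq h).symm
  · rw [hleft, ← NeWord.prod_singleton v hv, ← NeWord.append_prod (hne := hk)] at h
    exact hj (NeWord.fst_eq_of_prod_eq h).symm

theorem mem_range_of_of_commute {i : ι} {g : G i} (hg : g ≠ 1) {y : CoprodI G}
    (h : Commute (of g) y) : y ∈ (of : G i →* _).range := by
  rcases mem_range_of_or_exists_neWord i y with hy | ⟨a, b, j, k, c, hj, hk, rfl⟩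
  · exact hy
  have hu : a⁻¹ * g * a ≠ 1 := by rwa [Ne, mul_assoc, inv_mul_eq_one, eq_comm, mul_eq_right]
  refine (of_mul_prod_ne_prod_mul_of (c := c) hj hk hu (b * g * b⁻¹) ?_).elim
  calc of (a⁻¹ * g * a) * c.prod = (of a)⁻¹ * (of g * (of a * c.prod * of b)) * (of b)⁻¹ := by
        simp only [map_mul, map_inv]; group
    _ = (of a)⁻¹ * ((of a * c.prod * of b) * of g) * (of b)⁻¹ := by rw [h.eq]
    _ = c.prod * of (b * g * b⁻¹) := by simp only [map_mul, map_inv]; group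

end Monoid.CoprodI

namespace Monoid.Coprod

universe u v

variable {G : Type u} {H : Type v} [Group G] [Group H]

/-- Reduced words are only available for `CoprodI`, so `G ∗ H` is compared with the free product
of this `Bool`-indexed family. -/
abbrev summand (G : Type u) (H : Type v) : Bool → Type (max u v)
  | false => ULift.{v} G
  | true => ULift.{u} H

instance : ∀ b, Group (summand G H b)
  | false => ULift.group
  | true => ULift.group

def toCoprodI : G ∗ H →* CoprodI (summand G H) :=
  lift (CoprodI.of (i := false) |>.comp MulEquiv.ulift.symm.toMonoidHom)
    (CoprodI.of (i := true) |>.comp MulEquiv.ulift.symm.toMonoidHom)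

def ofCoprodI : CoprodI (summand G H) →* G ∗ H :=
  CoprodI.lift fun
    | false => inl.comp MulEquiv.ulift.toMonoidHom
    | true => inr.comp MulEquiv.ulift.toMonoidHom

theorem ofCoprodI_toCoprodI (x : G ∗ H) : ofCoprodI (toCoprodI x) = x := by
  suffices (ofCoprodI (G := G) (H := H)).comp toCoprodI = .id _ from DFunLike.congr_fun this x
  ext <;> simp [toCoprodI, ofCoprodI]

theorem mem_range_inr_of_commute {n : H} (hn : n ≠ 1) {x : G ∗ H} (h : Commute (inr n) x) :
    x ∈ (inr : H →* G ∗ H).range := by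
  have hup : (ULift.up n : ULift H) ≠ 1 := fun h => hn (congrArg ULift.down h)
  have hcomm : Commute (CoprodI.of (M := summand G H) (i := true) (ULift.up n)) (toCoprodI x) :=
    h.map toCoprodI
  obtain ⟨m, hm⟩ := CoprodI.mem_range_of_of_commute (G := summand G H) hup hcomm
  exact ⟨m.down, by rw [← ofCoprodI_toCoprodI x, ← hm]; rfl⟩

theorem eq_bot_of_normal_of_finite [Nontrivial H] [IsMulTorsionFree H] {N : Subgroup (G ∗ H)}
    [N.Normal] [Finite N] : N = ⊥ := by
  obtain ⟨t, ht⟩ := exists_ne (1 : H)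
  obtain ⟨n, hn, htn⟩ := isOfFinOrder_iff_pow_eq_one.mp
    (isOfFinOrder_of_finite (MulAut.conjNormal (H := N) (inr t)))
  refine eq_bot_iff.mpr fun x hx => ?_
  have hcomm : Commute (inr (t ^ n)) x := by
    have := congrArg (fun f : MulAut N => (f ⟨x, hx⟩ : G ∗ H)) htn
    simp only [← map_pow, MulAut.conjNormal_apply] at this
    exact mul_inv_eq_iff_eq_mul.mp this
  obtain ⟨m, rfl⟩ := mem_range_inr_of_commute ((pow_eq_one_iff_left hn.ne').not.mpr ht) hcomm
  have : IsOfFinOrder m := inr_injective.isOfFinOrder_iff.mp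
    (Submonoid.isOfFinOrder_coe.mpr (isOfFinOrder_of_finite (⟨_, hx⟩ : N)))
  rw [this.eq_one', map_one]
  exact one_mem _

end Monoid.Coprod

/-- The free product `C ∗ ℤ` of any group `C` with the infinite cyclic group has no non-trivial
finite normal subgroup. -/
theorem finite_normal_subgroup_of_coprod_int_eq_bot
    (C : Type*) [Group C] (H : Subgroup (Monoid.Coprod C (Multiplicative ℤ)))
    (hH : H.Normal) (hfin : Finite ↥H) : H = ⊥ :=
  Monoid.Coprod.eq_bot_of_normal_of_finite
end
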